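/- arXiv:2603.21239 — 3 statements merged into one kernel-verified Lean document; each statement's English description precedes it below -/
import Mathlib

section
/- Let R be a finite ring, let U be a subgroup of R^× with -1 ∈ U, and let S ⊆ R with 0 ∉ S and U S U = S. Assume Γ(R,U) is connected, and assume Γ(R,S) is connected and its complement graph is connected. Then Γ(R,S) is not prime if and only if there exists a two-sided ideal I of R with I ≠ 0 and I ≠ R such that I is a homogeneous set of Γ(R,S). -/
/-- The Cayley graph `Γ(R,S)` of a ring `R` with connection set `S`. -/
def cayleyGraph {R : Type*} [Ring R] (S : Set R) : SimpleGraph R :=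
  SimpleGraph.fromRel (fun a b => a - b ∈ S)

/-- The image in `R` of a subgroup `U` of the unit group `Rˣ`. -/
def unitsSet (R : Type*) [Ring R] (U : Subgroup Rˣ) : Set R :=
  (fun u : Rˣ => (u : R)) '' (U : Set Rˣ)

/-- `X` is a homogeneous set of `G`: every vertex outside `X` is adjacent to all of `X`
or to none of `X`. -/
def IsHomogeneousSet {V : Type*} (G : SimpleGraph V) (X : Set V) : Prop :=
  ∀ v ∉ X, (∀ x ∈ X, G.Adj v x) ∨ (∀ x ∈ X, ¬ G.Adj v x)

/-- A graph on a finite vertex set is prime if it has no nontrivial homogeneous set,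
i.e. no homogeneous set `X` with `2 ≤ |X| < |V|`. -/
def IsPrimeGraph {V : Type*} [Fintype V] (G : SimpleGraph V) : Prop :=
  ¬ ∃ X : Set V, IsHomogeneousSet G X ∧ 2 ≤ X.ncard ∧ X.ncard < Fintype.card V


/-!
Since `Γ(R,S)` and its complement are connected, two proper homogeneous sets through `0` have
a proper homogeneous union, so there is a greatest proper homogeneous set `M` through `0`, and
it contains a translate of any nontrivial homogeneous set. Translation by an element of `M`
and multiplication on either side by a unit of `U` are automorphisms of `Γ(R,S)` mapping some
point of `M` to `0`, so by maximality they map `M` into itself. Hence `M` is an additive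
subgroup stable under `U` on both sides; connectivity of `Γ(R,U)` says that `U` generates
`(R,+)`, so `M` is a two-sided ideal.
-/

open Set

section Graph

variable {V : Type*} {G : SimpleGraph V} {C X Y : Set V}

lemma SimpleGraph.Connected.exists_adj_mem_not_mem (hG : G.Connected) {u v : V}
    (hu : u ∈ C) (hv : v ∉ C) : ∃ x ∈ C, ∃ y ∉ C, G.Adj x y := by
  obtain ⟨d, -, hd₁, hd₂⟩ := (hG.preconnected u v).some.exists_boundary_dart C hu hv
  exact ⟨d.fst, hd₁, d.snd, hd₂, d.adj⟩

lemma isHomogeneousSet_singleton (v : V) : IsHomogeneousSet G {v} := by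
  intro w _
  by_cases h : G.Adj w v <;> simp [h]

lemma IsHomogeneousSet.compl (hX : IsHomogeneousSet G X) : IsHomogeneousSet Gᶜ X := by
  intro v hv
  have hne : ∀ x ∈ X, v ≠ x := fun x hx h => hv (h ▸ hx)
  rcases hX v hv with h | h
  · exact .inr fun x hx hc => ((G.compl_adj _ _).1 hc).2 (h x hx)
  · exact .inl fun x hx => (G.compl_adj _ _).2 ⟨hne x hx, h x hx⟩

lemma IsHomogeneousSet.image (hX : IsHomogeneousSet G X) (f : G ≃g G) :
    IsHomogeneousSet G (f '' X) := by
  intro v hv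
  have hv' : f.symm v ∉ X := fun h => hv ⟨_, h, f.apply_symm_apply v⟩
  rcases hX _ hv' with h | h
  · refine .inl ?_
    rintro _ ⟨x, hx, rfl⟩
    simpa using f.map_adj_iff.2 (h x hx)
  · refine .inr ?_
    rintro _ ⟨x, hx, rfl⟩ hadj
    exact h x hx (by simpa using f.symm.map_adj_iff.2 hadj)

lemma IsHomogeneousSet.union (hX : IsHomogeneousSet G X) (hY : IsHomogeneousSet G Y)
    (hXY : (X ∩ Y).Nonempty) : IsHomogeneousSet G (X ∪ Y) := by
  obtain ⟨c, hcX, hcY⟩ := hXY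
  intro v hv
  rw [mem_union, not_or] at hv
  rcases hX v hv.1 with h₁ | h₁ <;> rcases hY v hv.2 with h₂ | h₂
  · exact .inl fun x hx => hx.elim (h₁ x) (h₂ x)
  · exact absurd (h₁ c hcX) (h₂ c hcY)
  · exact absurd (h₂ c hcY) (h₁ c hcX)
  · exact .inr fun x hx => hx.elim (h₁ x) (h₂ x)

lemma IsHomogeneousSet.forall_adj_inter_of_union_eq_univ (hX : IsHomogeneousSet G X)
    (hY : IsHomogeneousSet G Y) (hXY : X ∪ Y = univ) {a b : V} (ha : a ∉ Y) (hb : b ∉ X)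
    (hab : G.Adj a b) : ∀ x ∈ X ∩ Y, ∀ y ∉ X ∩ Y, G.Adj x y := by
  have hcov : ∀ z, z ∈ X ∪ Y := fun z => hXY ▸ mem_univ z
  have haX : a ∈ X := (hcov a).resolve_right ha
  have hbY : b ∈ Y := (hcov b).resolve_left hb
  have hbX : ∀ x ∈ X, G.Adj b x := (hX b hb).resolve_right fun h => h a haX hab.symm
  have haY : ∀ y ∈ Y, G.Adj a y := (hY a ha).resolve_right fun h => h b hbY hab
  rintro x ⟨hxX, hxY⟩ y hy
  refine .symm ?_
  rcases not_and_or.1 hy with hyX | hyY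
  · have hay : G.Adj a y := haY y ((hcov y).resolve_left hyX)
    exact (hX y hyX).resolve_right (fun h => h a haX hay.symm) x hxX
  · have hby : G.Adj b y := hbX y ((hcov y).resolve_right hyY)
    exact (hY y hyY).resolve_right (fun h => h b hbY hby.symm) x hxY

lemma IsHomogeneousSet.union_ne_univ (hG : G.Connected) (hGc : Gᶜ.Connected)
    (hX : IsHomogeneousSet G X) (hY : IsHomogeneousSet G Y) (hXu : X ≠ univ) (hYu : Y ≠ univ)
    (hXY : (X ∩ Y).Nonempty) : X ∪ Y ≠ univ := by
  intro hXYu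
  obtain ⟨a, ha⟩ := (ne_univ_iff_exists_notMem Y).1 hYu
  obtain ⟨b, hb⟩ := (ne_univ_iff_exists_notMem X).1 hXu
  obtain ⟨c, hc⟩ := hXY
  have haC : a ∉ X ∩ Y := fun h => ha h.2
  -- `X ∩ Y` is joined to all of its complement in `G` or in `Gᶜ`, disconnecting the other one.
  by_cases hab : G.Adj a b
  · obtain ⟨x, hx, y, hy, hxy⟩ := hGc.exists_adj_mem_not_mem hc haC
    exact ((G.compl_adj _ _).1 hxy).2
      (hX.forall_adj_inter_of_union_eq_univ hY hXYu ha hb hab x hx y hy)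
  · have haX : a ∈ X := (hXYu ▸ mem_univ a : a ∈ X ∪ Y).resolve_right ha
    have hab' : Gᶜ.Adj a b := (G.compl_adj _ _).2 ⟨fun h => hb (h ▸ haX), hab⟩
    obtain ⟨x, hx, y, hy, hxy⟩ := hG.exists_adj_mem_not_mem hc haC
    exact ((G.compl_adj _ _).1 <| hX.compl.forall_adj_inter_of_union_eq_univ hY.compl hXYu
      ha hb hab' x hx y hy).2 hxy

def properHomogeneousSetsThrough (G : SimpleGraph V) (v : V) : Set (Set V) :=
  {X | IsHomogeneousSet G X ∧ v ∈ X ∧ X ≠ univ}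

lemma supClosed_properHomogeneousSetsThrough (hG : G.Connected) (hGc : Gᶜ.Connected) (v : V) :
    SupClosed (properHomogeneousSetsThrough G v) := by
  rintro X ⟨hX, hvX, hXu⟩ Y ⟨hY, hvY, hYu⟩
  have hXY : (X ∩ Y).Nonempty := ⟨v, hvX, hvY⟩
  exact ⟨hX.union hY hXY, .inl hvX, hX.union_ne_univ hG hGc hY hXu hYu hXY⟩

lemma exists_isGreatest_properHomogeneousSetsThrough [Finite V] [Nontrivial V]
    (hG : G.Connected) (hGc : Gᶜ.Connected) (v : V) :
    ∃ M, IsGreatest (properHomogeneousSetsThrough G v) M := by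
  have hne : (properHomogeneousSetsThrough G v).Nonempty :=
    ⟨{v}, isHomogeneousSet_singleton v, rfl, singleton_ne_univ v⟩
  exact ⟨_, (supClosed_properHomogeneousSetsThrough hG hGc v).sSup_mem_of_nonempty
    (toFinite _) hne subset_rfl, fun _ hX => le_sSup hX⟩

lemma image_mem_properHomogeneousSetsThrough {v : V}
    (hX : X ∈ properHomogeneousSetsThrough G v) (f : G ≃g G) :
    f '' X ∈ properHomogeneousSetsThrough G (f v) :=
  ⟨hX.1.image f, mem_image_of_mem f hX.2.1, by
    simpa [image_univ_of_surjective f.surjective] using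
      (image_injective.2 f.injective).ne hX.2.2⟩

lemma image_subset_of_isGreatest {v w : V} {M : Set V}
    (hM : IsGreatest (properHomogeneousSetsThrough G v) M) (f : G ≃g G) (hw : w ∈ M)
    (hfw : f w = v) : f '' M ⊆ M := by
  have hwM : M ∈ properHomogeneousSetsThrough G w :=
    ⟨hM.1.1, hw, hM.1.2.2⟩
  exact hM.2 (hfw ▸ image_mem_properHomogeneousSetsThrough hwM f)

lemma not_isPrimeGraph_iff [Fintype V] :
    ¬ IsPrimeGraph G ↔ ∃ X, IsHomogeneousSet G X ∧ X.Nontrivial ∧ X ≠ univ := by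
  have hlt : ∀ X : Set V, X.ncard < Nat.card V ↔ X ≠ univ :=
    fun X => ⟨by rintro h rfl; simp at h, ncard_lt_card⟩
  simp only [IsPrimeGraph, not_not, ← Nat.card_eq_fintype_card, Nat.succ_le_iff,
    one_lt_ncard_iff_nontrivial, hlt]

end Graph

section Ring

variable {R : Type*} [Ring R]

def cayleyGraphIso {S : Set R} (e : R ≃ R) (he : ∀ a b, e a - e b ∈ S ↔ a - b ∈ S) :
    cayleyGraph S ≃g cayleyGraph S where
  toEquiv := e
  map_rel_iff' := by simp [cayleyGraph, he]

lemma AddSubgroup.closure_eq_top_of_connected {T : Set R} (hT : (cayleyGraph T).Connected) :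
    AddSubgroup.closure T = ⊤ := by
  refine eq_top_iff.2 fun r _ => by_contra fun hr => ?_
  obtain ⟨x, hx, y, hy, hxy⟩ :=
    hT.exists_adj_mem_not_mem (C := AddSubgroup.closure T) (zero_mem _) hr
  have hxy' : x - y ∈ AddSubgroup.closure T := by
    rcases (SimpleGraph.fromRel_adj ..).1 hxy |>.2 with h | h
    · exact AddSubgroup.subset_closure h
    · simpa using neg_mem (AddSubgroup.subset_closure h)
  exact hy (by simpa using sub_mem hx hxy')

lemma TwoSidedIdeal.exists_coe_eq_of_closure_eq_top {T : Set R}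
    (hT : AddSubgroup.closure T = ⊤) (A : AddSubgroup R)
    (hl : ∀ t ∈ T, ∀ a ∈ A, t * a ∈ A) (hr : ∀ t ∈ T, ∀ a ∈ A, a * t ∈ A) :
    ∃ I : TwoSidedIdeal R, (I : Set R) = A := by
  have hmem : ∀ r, r ∈ AddSubgroup.closure T := fun r => hT ▸ AddSubgroup.mem_top r
  refine ⟨.mk' A A.zero_mem A.add_mem A.neg_mem (fun {r a} ha => ?_) (fun {a r} ha => ?_), ?_⟩
  · induction hmem r using AddSubgroup.closure_induction with
    | mem t ht => exact hl t ht a ha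
    | zero => simp
    | add x y _ _ hx hy => simpa [add_mul] using A.add_mem hx hy
    | neg x _ hx => simpa [neg_mul] using A.neg_mem hx
  · induction hmem r using AddSubgroup.closure_induction with
    | mem t ht => exact hr t ht a ha
    | zero => simp
    | add x y _ _ hx hy => simpa [mul_add] using A.add_mem hx hy
    | neg x _ hx => simpa [mul_neg] using A.neg_mem hx
  · ext; simp

end Ring

namespace TwoSidedIdeal

variable {R : Type*} [Ring R] (I : TwoSidedIdeal R)

lemma coe_nontrivial_iff_ne_bot : (I : Set R).Nontrivial ↔ I ≠ ⊥ := by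
  rw [nontrivial_iff_ne_singleton I.zero_mem, ← coe_bot, SetLike.coe_injective.ne_iff]

lemma coe_ne_univ_iff_ne_top : (I : Set R) ≠ univ ↔ I ≠ ⊤ := by
  rw [← coe_top, SetLike.coe_injective.ne_iff]

end TwoSidedIdeal

section Units

variable {R : Type*} [Ring R] {U : Subgroup Rˣ} {S : Set R}

lemma units_mul_mem_iff
    (hstab : ∀ u₁ ∈ U, ∀ u₂ ∈ U, ∀ s ∈ S, ((u₁ : Rˣ) : R) * s * ((u₂ : Rˣ) : R) ∈ S)
    {u : Rˣ} (hu : u ∈ U) (s : R) : (u : R) * s ∈ S ↔ s ∈ S :=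
  ⟨fun h => by simpa using hstab _ (inv_mem hu) 1 (one_mem U) _ h,
    fun h => by simpa using hstab u hu 1 (one_mem U) s h⟩

lemma mul_units_mem_iff
    (hstab : ∀ u₁ ∈ U, ∀ u₂ ∈ U, ∀ s ∈ S, ((u₁ : Rˣ) : R) * s * ((u₂ : Rˣ) : R) ∈ S)
    {u : Rˣ} (hu : u ∈ U) (s : R) : s * (u : R) ∈ S ↔ s ∈ S :=
  ⟨fun h => by simpa [mul_assoc] using hstab 1 (one_mem U) _ (inv_mem hu) _ h,
    fun h => by simpa using hstab 1 (one_mem U) u hu s h⟩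

lemma exists_twoSidedIdeal_coe_eq_of_isGreatest
    (hstab : ∀ u₁ ∈ U, ∀ u₂ ∈ U, ∀ s ∈ S, ((u₁ : Rˣ) : R) * s * ((u₂ : Rˣ) : R) ∈ S)
    (hconnU : (cayleyGraph (unitsSet R U)).Connected) {M : Set R}
    (hM : IsGreatest (properHomogeneousSetsThrough (cayleyGraph S) 0) M) :
    ∃ I : TwoSidedIdeal R, (I : Set R) = M := by
  have hM0 : (0 : R) ∈ M := hM.1.2.1
  have hsub : ∀ a ∈ M, ∀ b ∈ M, a - b ∈ M := fun a ha b hb =>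
    image_subset_of_isGreatest hM (cayleyGraphIso (Equiv.subRight b) (by simp)) hb
      (sub_self b) ⟨a, ha, rfl⟩
  have hl : ∀ t ∈ unitsSet R U, ∀ a ∈ M, t * a ∈ M := by
    rintro _ ⟨u, hu, rfl⟩ a ha
    refine image_subset_of_isGreatest hM (cayleyGraphIso (Units.mulLeft u) fun a b => ?_) hM0
      (mul_zero _) ⟨a, ha, rfl⟩
    simpa [← mul_sub] using units_mul_mem_iff hstab hu (a - b)
  have hr : ∀ t ∈ unitsSet R U, ∀ a ∈ M, a * t ∈ M := by
    rintro _ ⟨u, hu, rfl⟩ a ha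
    refine image_subset_of_isGreatest hM (cayleyGraphIso (Units.mulRight u) fun a b => ?_) hM0
      (zero_mul _) ⟨a, ha, rfl⟩
    simpa [← sub_mul] using mul_units_mem_iff hstab hu (a - b)
  exact TwoSidedIdeal.exists_coe_eq_of_closure_eq_top
    (AddSubgroup.closure_eq_top_of_connected hconnU)
    (AddSubgroup.ofSub M ⟨0, hM0⟩ fun a ha b hb => by
      simpa [← sub_eq_add_neg] using hsub a ha b hb)
    hl hr

end Units

theorem stmt3_general {R : Type*} [Ring R] [Fintype R]
    (U : Subgroup Rˣ)
    (S : Set R)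
    (hstab : ∀ u₁ ∈ U, ∀ u₂ ∈ U, ∀ s ∈ S, ((u₁ : Rˣ) : R) * s * ((u₂ : Rˣ) : R) ∈ S)
    (hconnU : (cayleyGraph (unitsSet R U)).Connected)
    (hconnS : (cayleyGraph S).Connected)
    (hanti : (cayleyGraph S)ᶜ.Connected) :
    ¬ IsPrimeGraph (cayleyGraph S) ↔
      ∃ I : TwoSidedIdeal R, I ≠ ⊥ ∧ I ≠ ⊤ ∧
        IsHomogeneousSet (cayleyGraph S) {x : R | x ∈ I} := by
  rw [not_isPrimeGraph_iff]
  constructor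
  · rintro ⟨X, hX, hXnt, hXu⟩
    have : Nontrivial R := nontrivial_of_nontrivial hXnt
    obtain ⟨M, hM⟩ := exists_isGreatest_properHomogeneousSetsThrough hconnS hanti (0 : R)
    obtain ⟨I, rfl⟩ := exists_twoSidedIdeal_coe_eq_of_isGreatest hstab hconnU hM
    obtain ⟨x₀, hx₀⟩ := hXnt.nonempty
    let τ := cayleyGraphIso (S := S) (Equiv.subRight x₀) (by simp)
    have hτX : τ '' X ⊆ I :=
      hM.2 (sub_self x₀ ▸ image_mem_properHomogeneousSetsThrough ⟨hX, hx₀, hXu⟩ τ)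
    exact ⟨I, I.coe_nontrivial_iff_ne_bot.1 ((hXnt.image τ.injective).mono hτX),
      I.coe_ne_univ_iff_ne_top.1 hM.1.2.2, hM.1.1⟩
  · rintro ⟨I, hbot, htop, hI⟩
    exact ⟨I, hI, I.coe_nontrivial_iff_ne_bot.2 hbot, I.coe_ne_univ_iff_ne_top.2 htop⟩

theorem stmt3 {R : Type*} [Ring R] [Fintype R]
    (U : Subgroup Rˣ) (hU : -1 ∈ U)
    (S : Set R) (h0 : (0 : R) ∉ S)
    (hstab : ∀ u₁ ∈ U, ∀ u₂ ∈ U, ∀ s ∈ S, ((u₁ : Rˣ) : R) * s * ((u₂ : Rˣ) : R) ∈ S)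
    (hconnU : (cayleyGraph (unitsSet R U)).Connected)
    (hconnS : (cayleyGraph S).Connected)
    (hanti : (cayleyGraph S)ᶜ.Connected) :
    ¬ IsPrimeGraph (cayleyGraph S) ↔
      ∃ I : TwoSidedIdeal R, I ≠ ⊥ ∧ I ≠ ⊤ ∧
        IsHomogeneousSet (cayleyGraph S) {x : R | x ∈ I} :=
  stmt3_general U S hstab hconnU hconnS hanti
end

section
/- Let F be a finite field with q elements, n ≥ 1, and R = M_n(F); assume det(-I_n) = 1 (i.e., char F = 2 or n is even). Let S ⊆ R with 0 ∉ S and u s v ∈ S for all u, v ∈ SL_n(F) and s ∈ S. Then the adjacency matrix over ℂ of the Cayley graph Γ(R,S) has at most n + q - 1 distinct eigenvalues; that is, the set of complex numbers λ lying in the spectrum of the adjacency matrix has cardinality at most n + q - 1. -/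
/-!
Fix a nontrivial additive character `ψ` of `F`. The additive characters of `Mₙ(F)` are exactly
`x ↦ ψ (tr (c * x))`, and they are eigenvectors of the adjacency matrix, with eigenvalue
`∑_{s ∈ S} ψ (tr (c * -s))`. As the trace is cyclic and `S` is stable under `SLₙ × SLₙ`, this
eigenvalue only depends on the `SLₙ × SLₙ`-orbit of `c`. Invertible matrices with the same
determinant lie in one orbit, and so do singular matrices of the same rank: a singular `c`
satisfies `g * c = c` for matrices `g` of any determinant, so for it `GLₙ`-equivalence is already
`SLₙ`-equivalence. Hence there are at most `n + (q - 1)` orbits, so at most that many eigenvalues.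
-/

open Matrix

theorem Function.FactorsThrough.ncard_range_le {α β γ : Type*} [Finite β] [Nonempty γ]
    {f : α → γ} {κ : α → β} (h : f.FactorsThrough κ) : (Set.range f).ncard ≤ Nat.card β := by
  let g := Function.extend κ f fun _ => Classical.arbitrary γ
  calc (Set.range f).ncard ≤ (Set.range g).ncard :=
        Set.ncard_le_ncard (by rintro _ ⟨a, rfl⟩; exact ⟨κ a, h.extend_apply _ a⟩)
          (Set.finite_range g)
    _ = Nat.card (Set.range g) := (Nat.card_coe_set_eq _).symm
    _ ≤ Nat.card β := Finite.card_range_le g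

theorem Matrix.spectrum_of_apply_sub {G : Type*} [AddCommGroup G] [Fintype G] [DecidableEq G]
    (w : G → ℂ) :
    spectrum ℂ (of fun a b : G => w (a - b)) =
      Set.range fun ψ : AddChar G ℂ => ∑ g, w g * ψ (-g) := by
  set b := AddChar.complexBasis G
  have hdiag : toLin b b (diagonal fun ψ : AddChar G ℂ => ∑ g, w g * ψ (-g)) =
      toLin' (of fun a b : G => w (a - b)) := by
    refine b.ext fun ψ => ?_
    rw [(hasEigenvector_toLin_diagonal _ ψ b).apply_eq_smul]
    ext a
    simp only [b, AddChar.complexBasis_apply, toLin'_apply, mulVec, dotProduct, of_apply,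
      Pi.smul_apply, smul_eq_mul, Finset.sum_mul]
    refine (Fintype.sum_equiv (Equiv.subLeft a) _ _ fun g => ?_).symm
    simp [mul_assoc, ← AddChar.map_add_eq_mul]
  rw [← spectrum_toLin', ← hdiag, spectrum_toLin, spectrum_diagonal]

theorem AddChar.mulShift_bijective {R : Type*} [Ring R] [Fintype R] {ψ : AddChar R ℂ}
    (hψ : ∀ a ≠ 0, ψ.mulShift a ≠ 1) : Function.Bijective ψ.mulShift := by
  refine (Fintype.bijective_iff_injective_and_card _).2 ⟨fun a b h => ?_, AddChar.card_eq.symm⟩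
  by_contra hab
  apply hψ (a - b) (sub_ne_zero.2 hab)
  rw [sub_eq_add_neg, ← AddChar.mulShift_mul, h, AddChar.mulShift_mul, add_neg_cancel,
    AddChar.mulShift_zero]

theorem Matrix.spectrum_of_apply_sub_eq_range {R : Type*} [Ring R] [Fintype R] [DecidableEq R]
    {ψ : AddChar R ℂ} (hψ : ∀ a ≠ 0, ψ.mulShift a ≠ 1) (w : R → ℂ) :
    spectrum ℂ (of fun a b : R => w (a - b)) = Set.range fun c => ∑ g, w g * ψ (c * -g) := by
  rw [spectrum_of_apply_sub w, ← (AddChar.mulShift_bijective hψ).surjective.range_comp]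
  rfl

theorem AddChar.sum_mul_apply_units_mul_mul_neg {R : Type*} [Ring R] [Fintype R]
    {ψ : AddChar R ℂ} (hψ : ∀ x y, ψ (x * y) = ψ (y * x)) {w : R → ℂ} {u v : Rˣ}
    (hw : ∀ g, w (v * g * u) = w g) (c : R) :
    ∑ g, w g * ψ (u * c * v * -g) = ∑ g, w g * ψ (c * -g) := by
  have hrot (g : R) : ψ (u * c * v * -g) = ψ (c * -(v * g * u)) := by
    rw [show (u * c * v * -g : R) = u * (c * v * -g) by noncomm_ring, hψ]
    congr 1
    noncomm_ring
  calc ∑ g, w g * ψ (u * c * v * -g)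
      = ∑ g, w (v * g * u) * ψ (c * -(v * g * u)) := by simp only [hrot, hw]
    _ = ∑ g, w g * ψ (c * -g) :=
      Fintype.sum_equiv ((Units.mulLeft v).trans (Units.mulRight u)) _ _ fun g => rfl

namespace Matrix

section CommRing

variable {m R : Type*} [Fintype m] [DecidableEq m] [CommRing R]

theorem SpecialLinearGroup.coe_mul_mul_coe_mem_iff {S : Set (Matrix m m R)}
    (hS : ∀ u v : Matrix m m R, u.det = 1 → v.det = 1 → ∀ s ∈ S, u * s * v ∈ S)
    (u v : SpecialLinearGroup m R) (g : Matrix m m R) :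
    (u : Matrix m m R) * g * (v : Matrix m m R) ∈ S ↔ g ∈ S := by
  refine ⟨fun hg => ?_, hS u v u.det_coe v.det_coe g⟩
  have := hS ((u⁻¹ : SpecialLinearGroup m R) : Matrix m m R)
    ((v⁻¹ : SpecialLinearGroup m R) : Matrix m m R) u⁻¹.det_coe v⁻¹.det_coe _ hg
  rwa [← mul_assoc, ← mul_assoc, ← SpecialLinearGroup.coe_mul, inv_mul_cancel,
    SpecialLinearGroup.coe_one, one_mul, mul_assoc, ← SpecialLinearGroup.coe_mul,
    mul_inv_cancel, SpecialLinearGroup.coe_one, mul_one] at this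

theorem exists_isUnit_mul_mul_eq_submatrix (X : Matrix m m R) (σ : Equiv.Perm m) :
    ∃ P Q : Matrix m m R, IsUnit P ∧ IsUnit Q ∧ P * X * Q = X.submatrix σ σ := by
  have hσ (τ : Equiv.Perm m) : IsUnit (τ.permMatrix R) := by
    rw [isUnit_iff_isUnit_det, det_permutation]
    exact τ.sign.isUnit.map (Int.castRingHom R)
  refine ⟨σ.permMatrix R, σ⁻¹.permMatrix R, hσ σ, hσ σ⁻¹, ?_⟩
  rw [PEquiv.toMatrix_toPEquiv_mul, PEquiv.mul_toMatrix_toPEquiv, submatrix_submatrix]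
  rfl

end CommRing

variable {m K : Type*} [Fintype m] [DecidableEq m] [Field K]

theorem mulShift_traceAddChar_ne_one {ψ : AddChar K ℂ} (hψ : ψ ≠ 1) {c : Matrix m m K}
    (hc : c ≠ 0) : (ψ.compAddMonoidHom (traceAddMonoidHom m K)).mulShift c ≠ 1 := by
  obtain ⟨t, ht⟩ := AddChar.ne_one_iff.1 hψ
  obtain ⟨i, j, hij⟩ : ∃ i j, c i j ≠ 0 := by
    by_contra! h
    exact hc (Matrix.ext h)
  intro h1
  apply ht
  simpa [trace_mul_single, hij] using DFunLike.congr_fun h1 (single j i ((c i j)⁻¹ * t))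

theorem exists_det_eq_and_mul_eq_self {c : Matrix m m K} (hc : c.det = 0) (δ : K) :
    ∃ g : Matrix m m K, g.det = δ ∧ g * c = c := by
  obtain ⟨v, hv, hvc⟩ := exists_vecMul_eq_zero_iff.2 hc
  obtain ⟨k, hk⟩ := Function.ne_iff.1 hv
  refine ⟨1 + vecMulVec (Pi.single k ((δ - 1) / v k)) v, ?_, ?_⟩
  · rw [vecMulVec_eq Unit, det_one_add_replicateCol_mul_replicateRow, dotProduct_single,
      mul_div_cancel₀ _ hk, add_sub_cancel]
  · rw [add_mul, one_mul, vecMulVec_mul, hvc, vecMulVec_zero, add_zero]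

theorem exists_det_eq_and_self_mul_eq_self {c : Matrix m m K} (hc : c.det = 0) (δ : K) :
    ∃ g : Matrix m m K, g.det = δ ∧ c * g = c := by
  obtain ⟨g, hg, hgc⟩ := exists_det_eq_and_mul_eq_self (c := cᵀ) (by rwa [det_transpose]) δ
  exact ⟨gᵀ, by rwa [det_transpose], by rw [← transpose_transpose c, ← transpose_mul, hgc]⟩

theorem exists_specialLinearGroup_mul_mul_eq_of_det_eq_zero {c P Q : Matrix m m K} (hc : c.det = 0)
    (hP : IsUnit P) (hQ : IsUnit Q) :
    ∃ u v : SpecialLinearGroup m K, u * c * v = P * c * Q := by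
  obtain ⟨g, hg, hgc⟩ := exists_det_eq_and_mul_eq_self hc P.det⁻¹
  obtain ⟨h, hh, hch⟩ := exists_det_eq_and_self_mul_eq_self hc Q.det⁻¹
  refine ⟨⟨P * g, ?_⟩, ⟨h * Q, ?_⟩, ?_⟩
  · rw [det_mul, hg, mul_inv_cancel₀ ((isUnit_iff_isUnit_det P).1 hP).ne_zero]
  · rw [det_mul, hh, inv_mul_cancel₀ ((isUnit_iff_isUnit_det Q).1 hQ).ne_zero]
  · change P * g * c * (h * Q) = P * c * Q
    rw [mul_assoc P, hgc, ← mul_assoc, mul_assoc P, hch]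

theorem exists_isUnit_mul_mul_eq_of_rank_eq {c d : Matrix m m K} (h : c.rank = d.rank) :
    ∃ P Q : Matrix m m K, IsUnit P ∧ IsUnit Q ∧ P * c * Q = d := by
  obtain ⟨V, U, e, ⟨V, rfl⟩, ⟨U, rfl⟩, hc⟩ := exists_rank_normal_form c
  obtain ⟨V', U', e', ⟨V', rfl⟩, ⟨U', rfl⟩, hd⟩ := exists_rank_normal_form d
  revert e' hd
  rw [← h]
  intro e' hd
  obtain ⟨P, Q, ⟨P, rfl⟩, ⟨Q, rfl⟩, hPQ⟩ := exists_isUnit_mul_mul_eq_submatrix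
    ((V : Matrix m m K) * c * (U : Matrix m m K)) (e'.trans e.symm)
  have he : ⇑e ∘ ⇑(e'.trans e.symm) = e' := by ext; simp
  rw [hc, submatrix_submatrix, he, ← hd] at hPQ
  refine ⟨↑(V'⁻¹ * P * V), ↑(U * Q * U'⁻¹), Units.isUnit _, Units.isUnit _, ?_⟩
  calc ↑(V'⁻¹ * P * V) * c * ↑(U * Q * U'⁻¹)
      = ↑V'⁻¹ * (↑P * (↑V * c * ↑U) * ↑Q) * ↑U'⁻¹ := by simp only [Units.val_mul, mul_assoc]
    _ = d := by rw [hc, hPQ]; simp [mul_assoc]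

theorem rank_lt_card_of_det_eq_zero {c : Matrix m m K} (hc : c.det = 0) :
    c.rank < Fintype.card m := by
  refine (rank_le_card_width c).lt_of_ne fun h => ?_
  obtain ⟨P, Q, hP, hQ, hPQ⟩ := exists_isUnit_mul_mul_eq_of_rank_eq (h.trans rank_one.symm)
  have := congrArg det hPQ
  rw [det_mul, det_mul, hc, mul_zero, zero_mul, det_one] at this
  exact zero_ne_one this

open Classical in
noncomputable def rankOrDet (c : Matrix m m K) : Fin (Fintype.card m) ⊕ Kˣ :=
  if h : c.det = 0 then .inl ⟨c.rank, rank_lt_card_of_det_eq_zero h⟩ else .inr (.mk0 c.det h)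

theorem exists_specialLinearGroup_mul_mul_eq_of_rankOrDet_eq {c d : Matrix m m K}
    (h : c.rankOrDet = d.rankOrDet) : ∃ u v : SpecialLinearGroup m K, u * c * v = d := by
  unfold rankOrDet at h
  by_cases hc : c.det = 0 <;> by_cases hd : d.det = 0 <;>
    simp only [hc, hd, ↓reduceDIte, reduceCtorEq, Sum.inl.injEq, Sum.inr.injEq, Fin.mk.injEq,
      Units.mk0_inj] at h
  · obtain ⟨P, Q, hP, hQ, rfl⟩ := exists_isUnit_mul_mul_eq_of_rank_eq h
    exact exists_specialLinearGroup_mul_mul_eq_of_det_eq_zero hc hP hQ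
  · refine ⟨⟨d * c⁻¹, ?_⟩, 1, ?_⟩
    · rw [det_mul, det_nonsing_inv, h, Ring.inverse_eq_inv', mul_inv_cancel₀ hd]
    · change d * c⁻¹ * c * 1 = d
      rw [mul_one, nonsing_inv_mul_cancel_right _ _ (isUnit_iff_ne_zero.2 hc)]

end Matrix

open scoped Classical in
theorem stmt17_general {F : Type*} [Field F] [Fintype F] {n : ℕ}
    (S : Set (Matrix (Fin n) (Fin n) F))
    (hstab : ∀ u v : Matrix (Fin n) (Fin n) F, u.det = 1 → v.det = 1 →
      ∀ s ∈ S, u * s * v ∈ S) :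
    (spectrum ℂ (Matrix.of fun a b : Matrix (Fin n) (Fin n) F =>
        if a - b ∈ S then (1 : ℂ) else 0)).ncard ≤ n + Fintype.card F - 1 := by
  obtain ⟨ψ, hψ⟩ := AddChar.exists_apply_ne_zero.2 (one_ne_zero : (1 : F) ≠ 0)
  set τ := ψ.compAddMonoidHom (traceAddMonoidHom (Fin n) F)
  set w : Matrix (Fin n) (Fin n) F → ℂ := fun g => if g ∈ S then 1 else 0
  have hτ (c : Matrix (Fin n) (Fin n) F) (hc : c ≠ 0) : τ.mulShift c ≠ 1 :=
    mulShift_traceAddChar_ne_one (AddChar.ne_one_iff.2 ⟨1, hψ⟩) hc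
  have hf : (fun c => ∑ g, w g * τ (c * -g)).FactorsThrough rankOrDet := fun c d h => by
    obtain ⟨u, v, rfl⟩ := exists_specialLinearGroup_mul_mul_eq_of_rankOrDet_eq h
    refine (AddChar.sum_mul_apply_units_mul_mul_neg (ψ := τ) (u := u.toGL) (v := v.toGL)
      (fun x y => congrArg ψ (trace_mul_comm x y)) (fun g => ?_) c).symm
    simp only [w, SpecialLinearGroup.coe_GL_coe_matrix,
      SpecialLinearGroup.coe_mul_mul_coe_mem_iff hstab]
  calc _ = (Set.range fun c => ∑ g, w g * τ (c * -g)).ncard :=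
        congrArg Set.ncard (spectrum_of_apply_sub_eq_range hτ w)
    _ ≤ Nat.card (Fin (Fintype.card (Fin n)) ⊕ Fˣ) := hf.ncard_range_le
    _ = n + Fintype.card F - 1 := by
      simp only [Nat.card_eq_fintype_card, Fintype.card_sum, Fintype.card_units,
        Fintype.card_fin]
      have := Fintype.one_lt_card (α := F)
      omega

open scoped Classical in
theorem stmt17 {F : Type*} [Field F] [Fintype F] {n : ℕ} (hn : 1 ≤ n)
    (hdet : (-1 : Matrix (Fin n) (Fin n) F).det = 1)
    (S : Set (Matrix (Fin n) (Fin n) F))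
    (h0 : (0 : Matrix (Fin n) (Fin n) F) ∉ S)
    (hstab : ∀ u v : Matrix (Fin n) (Fin n) F, u.det = 1 → v.det = 1 →
      ∀ s ∈ S, u * s * v ∈ S) :
    (spectrum ℂ (Matrix.of fun a b : Matrix (Fin n) (Fin n) F =>
        if a - b ∈ S then (1 : ℂ) else 0)).ncard ≤ n + Fintype.card F - 1 :=
  stmt17_general S hstab
end

section
/- Let F be a finite field, n ≥ 2, and R = M_n(F). Let S ⊆ R with 0 ∉ S and u s v ∈ S for all u, v ∈ GL_n(F) and s ∈ S. Let A be the adjacency matrix over ℂ of the Cayley graph Γ(R,S). Then Γ(R,S) has no perfect state transfer: for every real number t > 0 and all distinct X, Y ∈ M_n(F), the (X,Y) entry of the matrix exponential exp(i t A) has absolute value strictly less than 1. -/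
/-!
`exp(itA)` is unitary, so an entry of modulus one is the only nonzero entry of its row. The
affine maps `W ↦ u (W - X) + X` with `u` a unit are automorphisms of the Cayley graph fixing `X`,
and `exp(itA)` is invariant under them; hence perfect state transfer from `X` to `Y` forces
`u (Y - X) = Y - X` for every unit `u`. In `Mₙ(F)` with `n ≥ 2` the transvections show that only
`0` is fixed by all invertible matrices, so `X = Y`.
-/

open Matrix Complex

section MatrixExp

variable {ι 𝕜 : Type*} [Fintype ι] [DecidableEq ι] [RCLike 𝕜]

theorem Matrix.IsHermitian.exp_I_mul_smul_mem_unitaryGroup {A : Matrix ι ι ℂ}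
    (hA : A.IsHermitian) (t : ℝ) : NormedSpace.exp ((I * t) • A) ∈ unitaryGroup ι ℂ := by
  have hstar : star (I * t) = -(I * t) := by simp [mul_comm]
  rw [mem_unitaryGroup_iff, star_eq_conjTranspose, ← exp_conjTranspose, conjTranspose_smul, hA.eq,
    hstar, ← exp_add_of_commute _ _ ((Commute.refl A).smul_left _ |>.smul_right _), ← add_smul,
    add_neg_cancel, zero_smul, NormedSpace.exp_zero]

theorem Matrix.exp_submatrix_equiv (e : ι ≃ ι) (B : Matrix ι ι 𝕜) :
    (NormedSpace.exp B).submatrix e e = NormedSpace.exp (B.submatrix e e) := by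
  open scoped Matrix.Norms.Operator in
  exact NormedSpace.map_exp (reindexAlgEquiv ℚ 𝕜 e.symm) (continuous_id.matrix_reindex _ _) B

theorem Matrix.exp_apply_equiv (e : ι ≃ ι) {B : Matrix ι ι 𝕜}
    (hB : ∀ a b, B (e a) (e b) = B a b) (a b : ι) :
    NormedSpace.exp B (e a) (e b) = NormedSpace.exp B a b := by
  have hBe : B.submatrix e e = B := by ext; exact hB _ _
  change (NormedSpace.exp B).submatrix e e a b = _
  rw [exp_submatrix_equiv, hBe]

theorem Matrix.apply_eq_zero_of_norm_apply_eq_one {U : Matrix ι ι 𝕜}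
    (hU : U ∈ unitaryGroup ι 𝕜) {i j k : ι} (hij : ‖U i j‖ = 1) (hk : k ≠ j) :
    U i k = 0 := by
  have hrow : ∑ l, ‖U i l‖ ^ 2 = 1 := by
    have := congrArg (fun M => RCLike.re (M i i)) (mem_unitaryGroup_iff.mp hU)
    simpa [Matrix.mul_apply, ← starRingEnd_apply, RCLike.mul_conj] using this
  rw [← Finset.add_sum_erase _ _ (Finset.mem_univ j), hij, one_pow, add_eq_left,
    Finset.sum_eq_zero_iff_of_nonneg (fun _ _ => sq_nonneg _)] at hrow
  simpa using hrow k (by simp [hk])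

end MatrixExp

theorem Matrix.eq_zero_of_forall_unit_mul_eq {n R : Type*} [Fintype n] [DecidableEq n]
    [Nontrivial n] [CommRing R] {D : Matrix n n R}
    (hD : ∀ u : (Matrix n n R)ˣ, (u : Matrix n n R) * D = D) : D = 0 := by
  ext j b
  obtain ⟨i, hij⟩ := exists_ne j
  let u : (Matrix n n R)ˣ :=
    ⟨transvection i j 1, transvection i j (-1),
      by simp [transvection_mul_transvection_same i j hij],
      by simp [transvection_mul_transvection_same i j hij]⟩
  simpa [u] using congrFun (congrFun (hD u) i) b

section Cayley

variable {R : Type*} [Ring R] {S : Set R}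

open scoped Classical in
noncomputable def cayleyAdjMatrix (S : Set R) : Matrix R R ℂ :=
  of fun a b => if a - b ∈ S then 1 else 0

def Units.affinePerm (u : Rˣ) (X : R) : Equiv.Perm R :=
  (Equiv.subRight X).trans ((Units.mulLeft u).trans (Equiv.addRight X))

theorem Units.affinePerm_apply (u : Rˣ) (X W : R) : u.affinePerm X W = u * (W - X) + X := rfl

theorem cayleyAdjMatrix_isHermitian (hS : ∀ s ∈ S, -s ∈ S) :
    (cayleyAdjMatrix S).IsHermitian := by
  have hSneg : ∀ s, -s ∈ S ↔ s ∈ S := fun s => ⟨fun h => by simpa using hS _ h, hS s⟩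
  ext a b
  classical
  simp [cayleyAdjMatrix, ← hSneg (b - a)]

theorem cayleyAdjMatrix_apply_equiv (e : R ≃ R) (he : ∀ a b, e a - e b ∈ S ↔ a - b ∈ S)
    (a b : R) : cayleyAdjMatrix S (e a) (e b) = cayleyAdjMatrix S a b := by
  classical
  simp [cayleyAdjMatrix, he]

theorem exp_I_mul_smul_cayleyAdjMatrix_mem_unitaryGroup [Fintype R] [DecidableEq R]
    (hS : ∀ u : Rˣ, ∀ s ∈ S, (u : R) * s ∈ S) (t : ℝ) :
    NormedSpace.exp ((I * t) • cayleyAdjMatrix S) ∈ unitaryGroup R ℂ :=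
  (cayleyAdjMatrix_isHermitian fun s hs => by
    simpa using hS (-1) s hs).exp_I_mul_smul_mem_unitaryGroup t

theorem unit_mul_sub_eq_of_norm_exp_cayleyAdjMatrix_apply_eq_one [Fintype R] [DecidableEq R]
    (hS : ∀ u : Rˣ, ∀ s ∈ S, (u : R) * s ∈ S) (t : ℝ) {X Y : R}
    (hXY : ‖NormedSpace.exp ((I * t) • cayleyAdjMatrix S) X Y‖ = 1) (u : Rˣ) :
    (u : R) * (Y - X) = Y - X := by
  set U := NormedSpace.exp ((I * t) • cayleyAdjMatrix S)
  have hU : U ∈ unitaryGroup R ℂ := exp_I_mul_smul_cayleyAdjMatrix_mem_unitaryGroup hS t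
  have hUe : U X (u.affinePerm X Y) = U X Y := by
    have hX : u.affinePerm X X = X := by simp [Units.affinePerm_apply]
    nth_rw 1 [← hX]
    refine exp_apply_equiv _ (fun a b => ?_) X Y
    rw [Matrix.smul_apply, Matrix.smul_apply, cayleyAdjMatrix_apply_equiv]
    intro a b
    rw [Units.affinePerm_apply, Units.affinePerm_apply, add_sub_add_right_eq_sub, ← mul_sub,
      sub_sub_sub_cancel_right]
    exact ⟨fun h => by simpa using hS u⁻¹ _ h, hS u _⟩
  have hfix : u.affinePerm X Y = Y := by
    by_contra hne
    rw [apply_eq_zero_of_norm_apply_eq_one hU hXY hne] at hUe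
    simp [← hUe] at hXY
  rwa [Units.affinePerm_apply, ← eq_sub_iff_add_eq] at hfix

end Cayley

open scoped Classical in
theorem stmt18_general {F : Type*} [Field F] [Fintype F] {n : ℕ} (hn : 2 ≤ n)
    (S : Set (Matrix (Fin n) (Fin n) F))
    (hstab : ∀ u v : (Matrix (Fin n) (Fin n) F)ˣ, ∀ s ∈ S,
      (u : Matrix (Fin n) (Fin n) F) * s * (v : Matrix (Fin n) (Fin n) F) ∈ S)
    (A : Matrix (Matrix (Fin n) (Fin n) F) (Matrix (Fin n) (Fin n) F) ℂ)
    (hA : A = Matrix.of fun a b => if a - b ∈ S then (1 : ℂ) else 0) :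
    ∀ t : ℝ, 0 < t → ∀ X Y : Matrix (Fin n) (Fin n) F, X ≠ Y →
      ‖NormedSpace.exp ((Complex.I * (t : ℂ)) • A) X Y‖ < 1 := by
  intro t _ X Y hXY
  have : Nontrivial (Fin n) := Fin.nontrivial_iff_two_le.mpr hn
  have hS : ∀ u : (Matrix (Fin n) (Fin n) F)ˣ, ∀ s ∈ S,
      (u : Matrix (Fin n) (Fin n) F) * s ∈ S :=
    fun u s hs => by simpa using hstab u 1 s hs
  change A = cayleyAdjMatrix S at hA
  subst hA
  have hU := exp_I_mul_smul_cayleyAdjMatrix_mem_unitaryGroup hS t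
  refine (entry_norm_bound_of_unitary hU X Y).lt_of_ne fun h => hXY ?_
  exact (sub_eq_zero.mp (eq_zero_of_forall_unit_mul_eq
    (unit_mul_sub_eq_of_norm_exp_cayleyAdjMatrix_apply_eq_one hS t h))).symm

open scoped Classical in
theorem stmt18 {F : Type*} [Field F] [Fintype F] {n : ℕ} (hn : 2 ≤ n)
    (S : Set (Matrix (Fin n) (Fin n) F))
    (h0 : (0 : Matrix (Fin n) (Fin n) F) ∉ S)
    (hstab : ∀ u v : (Matrix (Fin n) (Fin n) F)ˣ, ∀ s ∈ S,
      (u : Matrix (Fin n) (Fin n) F) * s * (v : Matrix (Fin n) (Fin n) F) ∈ S)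
    (A : Matrix (Matrix (Fin n) (Fin n) F) (Matrix (Fin n) (Fin n) F) ℂ)
    (hA : A = Matrix.of fun a b => if a - b ∈ S then (1 : ℂ) else 0) :
    ∀ t : ℝ, 0 < t → ∀ X Y : Matrix (Fin n) (Fin n) F, X ≠ Y →
      ‖NormedSpace.exp ((Complex.I * (t : ℂ)) • A) X Y‖ < 1 :=
  stmt18_general hn S hstab A hA
end
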